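/- arXiv:2009.10654 — 3 statements merged into one kernel-verified Lean document; each statement's English description precedes it below -/
import Mathlib

section
/- Let 1/2 < α < 1, γ > 0 and t > 0. Then (γ / Γ(2α−1)) · ∫₀ᵗ (t−s)^{2α−2} · E_{2α−1}(γ s^{2α−1}) ds = E_{2α−1}(γ t^{2α−1}) − 1, where the integral is the (interval) Lebesgue integral over s ∈ (0, t). -/
/-!
Expanding `E_β(γ s^β)` as a power series in `s^β` (with `β = 2α - 1`), each term integrates against
the kernel `(t - s)^{β - 1}` by Euler's Beta integral,
`∫₀ᵗ (t - s)^{β - 1} s^{kβ} ds = Γ(β) Γ(kβ + 1) / Γ((k + 1)β + 1) · t^{(k + 1)β}`,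
which turns the `k`-th term of the series for `E_β(γ s^β)` into `Γ(β)/γ` times the `(k + 1)`-st
term of the series for `E_β(γ t^β)`. All terms are nonnegative, so summation and integration commute
as soon as the resulting series converges; convergence of `Σ z^k / Γ(kβ + c)` for `0 < β ≤ 1`
follows from the ratio test, the ratio `Γ(x)/Γ(x + β) = O(x^{-β})` coming from the log-convexity
of `Γ`.
-/

/-- The one-parameter Mittag-Leffler function `E_β(z) = Σ_{k=0}^∞ z^k / Γ(kβ + 1)`. -/
noncomputable def mittagLeffler (β z : ℝ) : ℝ :=
  ∑' k : ℕ, z ^ k / Real.Gamma ((k : ℝ) * β + 1)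

open Real Filter MeasureTheory Topology Set

namespace Real

-- log-convexity of `Γ` on the segment from `x + β` to `x + β + 1`, at the point `x + 1`
theorem mul_Gamma_le_rpow_mul_Gamma_add {β x : ℝ} (hβ : 0 ≤ β) (hβ1 : β ≤ 1) (hx : 0 < x) :
    x * Gamma x ≤ (x + β) ^ (1 - β) * Gamma (x + β) := by
  have hxβ : 0 < x + β := by linarith
  have hΓ := Gamma_pos_of_pos hxβ
  have hconv := convexOn_log_Gamma.2 (mem_Ioi.2 hxβ) (mem_Ioi.2 (by linarith : 0 < x + β + 1))
    hβ (by linarith : 0 ≤ 1 - β) (by ring)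
  rw [show β • (x + β) + (1 - β) • (x + β + 1) = x + 1 by simp only [smul_eq_mul]; ring] at hconv
  simp only [Function.comp_apply, smul_eq_mul] at hconv
  calc x * Gamma x = Gamma (x + 1) := (Gamma_add_one hx.ne').symm
    _ ≤ exp (β * log (Gamma (x + β)) + (1 - β) * log (Gamma (x + β + 1))) :=
        (exp_log (Gamma_pos_of_pos (by linarith))).symm.le.trans (exp_le_exp.2 hconv)
    _ = (x + β) ^ (1 - β) * Gamma (x + β) := by
        rw [Gamma_add_one hxβ.ne', log_mul hxβ.ne' hΓ.ne', rpow_def_of_pos hxβ, ← exp_log hΓ,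
          ← exp_add, log_exp]
        ring_nf

theorem Gamma_le_two_mul_rpow_mul_Gamma_add {β x : ℝ} (hβ : 0 ≤ β) (hβ1 : β ≤ 1) (hx : 1 ≤ x) :
    Gamma x ≤ 2 * (x + β) ^ (-β) * Gamma (x + β) := by
  have hx0 : 0 < x := by linarith
  have hxβ : 0 < x + β := by linarith
  have hΓ := Gamma_pos_of_pos hxβ
  refine le_of_mul_le_mul_left ?_ hx0
  calc x * Gamma x ≤ (x + β) ^ (1 - β) * Gamma (x + β) :=
        mul_Gamma_le_rpow_mul_Gamma_add hβ hβ1 hx0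
    _ = (x + β) * ((x + β) ^ (-β) * Gamma (x + β)) := by
        rw [sub_eq_add_neg, rpow_add hxβ, rpow_one, mul_assoc]
    _ ≤ 2 * x * ((x + β) ^ (-β) * Gamma (x + β)) := by gcongr; linarith
    _ = x * (2 * (x + β) ^ (-β) * Gamma (x + β)) := by ring

end Real

theorem summable_pow_div_Gamma_mul_add {β c : ℝ} (hβ : 0 < β) (hβ1 : β ≤ 1) (hc : 1 ≤ c)
    (z : ℝ) : Summable fun k : ℕ => z ^ k / Gamma (k * β + c) := by
  refine Summable.of_norm (summable_of_ratio_norm_eventually_le (r := 1 / 2) (by norm_num) ?_)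
  have hlim : Tendsto (fun k : ℕ => 2 * |z| * (k * β + c + β) ^ (-β)) atTop (𝓝 0) := by
    have hk : Tendsto (fun k : ℕ => k * β + c + β) atTop atTop :=
      tendsto_atTop_add_const_right _ _ <| tendsto_atTop_add_const_right _ _ <|
        tendsto_natCast_atTop_atTop.atTop_mul_const hβ
    simpa using ((tendsto_rpow_neg_atTop hβ).comp hk).const_mul (2 * |z|)
  filter_upwards [hlim.eventually_le_const (by norm_num : (0 : ℝ) < 1 / 2)] with k hk
  set x : ℝ := k * β + c
  have hx : 1 ≤ x := le_add_of_nonneg_of_le (by positivity) hc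
  have hΓ : 0 < Gamma x := Gamma_pos_of_pos (by linarith)
  have hΓ' : 0 < Gamma (x + β) := Gamma_pos_of_pos (by linarith)
  have hratio : |z| * Gamma x / Gamma (x + β) ≤ 2 * |z| * (x + β) ^ (-β) := by
    rw [div_le_iff₀ hΓ', mul_assoc 2, mul_left_comm 2, mul_assoc |z|]
    exact mul_le_mul_of_nonneg_left (Gamma_le_two_mul_rpow_mul_Gamma_add hβ.le hβ1 hx)
      (abs_nonneg z)
  have hsucc : ((k + 1 : ℕ) : ℝ) * β + c = x + β := by push_cast; ring
  simp only [norm_div, norm_pow, Real.norm_eq_abs, abs_abs, abs_of_pos hΓ, hsucc, abs_of_pos hΓ']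
  calc |z| ^ (k + 1) / Gamma (x + β) = |z| ^ k / Gamma x * (|z| * Gamma x / Gamma (x + β)) := by
        field_simp; ring
    _ ≤ |z| ^ k / Gamma x * (1 / 2) := mul_le_mul_of_nonneg_left (hratio.trans hk) (by positivity)
    _ = 1 / 2 * (|z| ^ k / Gamma x) := mul_comm _ _

theorem integral_rpow_mul_sub_rpow {a b t : ℝ} (ha : 0 < a) (hb : 0 < b) (ht : 0 < t) :
    ∫ s in (0 : ℝ)..t, s ^ (a - 1) * (t - s) ^ (b - 1) =
      Gamma a * Gamma b / Gamma (a + b) * t ^ (a + b - 1) := by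
  apply Complex.ofReal_injective
  rw [← intervalIntegral.integral_ofReal]
  have hcpow : ∀ s ∈ uIcc 0 t, ((s ^ (a - 1) * (t - s) ^ (b - 1) : ℝ) : ℂ) =
      (s : ℂ) ^ ((a : ℂ) - 1) * ((t : ℂ) - s) ^ ((b : ℂ) - 1) := by
    intro s hs
    rw [uIcc_of_le ht.le] at hs
    push_cast [Complex.ofReal_cpow hs.1, Complex.ofReal_cpow (sub_nonneg.2 hs.2)]
    rfl
  rw [intervalIntegral.integral_congr hcpow, Complex.betaIntegral_scaled _ _ ht,
    Complex.betaIntegral_eq_Gamma_mul_div _ _ (by simpa) (by simpa)]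
  push_cast [Complex.ofReal_cpow ht.le, ← Complex.Gamma_ofReal]
  ring

theorem integral_sub_rpow_mul_pow_div_Gamma {β γ t : ℝ} (hβ : 0 < β) (ht : 0 < t) (k : ℕ) :
    ∫ s in (0 : ℝ)..t, (t - s) ^ (β - 1) * ((γ * s ^ β) ^ k / Gamma (k * β + 1)) =
      Gamma β * t ^ β * ((γ * t ^ β) ^ k / Gamma (k * β + (β + 1))) := by
  have hpow : ∀ {s : ℝ}, 0 ≤ s → (γ * s ^ β) ^ k = γ ^ k * s ^ (k * β) := fun hs => by
    rw [mul_pow, ← rpow_natCast (_ ^ β), ← rpow_mul hs, mul_comm β]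
  have hΓ : Gamma (k * β + 1) ≠ 0 := (Gamma_pos_of_pos (by positivity)).ne'
  have hbeta := integral_rpow_mul_sub_rpow (a := k * β + 1) (by positivity) hβ ht
  rw [add_sub_cancel_right, show k * β + 1 + β - 1 = k * β + β by ring,
    show k * β + 1 + β = k * β + (β + 1) by ring] at hbeta
  calc ∫ s in (0 : ℝ)..t, (t - s) ^ (β - 1) * ((γ * s ^ β) ^ k / Gamma (k * β + 1))
      = ∫ s in (0 : ℝ)..t, γ ^ k / Gamma (k * β + 1) * (s ^ (k * β) * (t - s) ^ (β - 1)) := by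
        refine intervalIntegral.integral_congr fun s hs => ?_
        rw [uIcc_of_le ht.le] at hs
        simp only [hpow hs.1]
        ring
    _ = Gamma β * t ^ β * ((γ * t ^ β) ^ k / Gamma (k * β + (β + 1))) := by
        rw [intervalIntegral.integral_const_mul, hbeta, hpow ht.le, rpow_add ht]
        field_simp

theorem intervalIntegral.integral_tsum_of_nonneg {ι : Type*} [Countable ι] {f : ι → ℝ → ℝ}
    {a b : ℝ} (hab : a ≤ b) (hf : ∀ i, IntervalIntegrable (f i) volume a b)
    (hf0 : ∀ i, ∀ s ∈ Ioc a b, 0 ≤ f i s) (hsum : Summable fun i => ∫ s in a..b, f i s) :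
    ∫ s in a..b, ∑' i, f i s = ∑' i, ∫ s in a..b, f i s := by
  simp only [intervalIntegral.integral_of_le hab] at hsum ⊢
  refine (integral_tsum_of_summable_integral_norm (fun i => (hf i).1) ?_).symm
  exact hsum.congr fun i => setIntegral_congr_fun measurableSet_Ioc fun s hs =>
    (norm_of_nonneg (hf0 i s hs)).symm

theorem mittagLeffler_sub_one {β : ℝ} (hβ : 0 < β) (hβ1 : β ≤ 1) (z : ℝ) :
    mittagLeffler β z - 1 = ∑' k : ℕ, z ^ (k + 1) / Gamma ((k + 1 : ℕ) * β + 1) := by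
  rw [mittagLeffler, (summable_pow_div_Gamma_mul_add hβ hβ1 le_rfl z).tsum_eq_zero_add]
  simp

theorem mul_integral_sub_rpow_mul_mittagLeffler {β γ t : ℝ} (hβ : 0 < β) (hβ1 : β ≤ 1)
    (hγ : 0 ≤ γ) (ht : 0 < t) :
    γ * ∫ s in (0 : ℝ)..t, (t - s) ^ (β - 1) * mittagLeffler β (γ * s ^ β) =
      Gamma β * (mittagLeffler β (γ * t ^ β) - 1) := by
  set F : ℕ → ℝ → ℝ := fun k s => (t - s) ^ (β - 1) * ((γ * s ^ β) ^ k / Gamma (k * β + 1))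
  have hF_int : ∀ k, IntervalIntegrable (F k) volume 0 t := fun k => by
    have hkernel : IntervalIntegrable (fun s : ℝ => (t - s) ^ (β - 1)) volume 0 t := by
      simpa using ((intervalIntegral.intervalIntegrable_rpow' (a := 0) (b := t)
        (by linarith : -1 < β - 1)).comp_sub_left t).symm
    refine hkernel.mul_continuousOn (ContinuousOn.div_const ?_ _)
    exact ((continuousOn_id.rpow_const fun _ _ => Or.inr hβ.le).const_smul γ).pow k
  have hF_nonneg : ∀ k, ∀ s ∈ Ioc 0 t, 0 ≤ F k s := fun k s hs => by
    have : 0 ≤ t - s := sub_nonneg.2 hs.2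
    have : 0 < s := hs.1
    positivity
  have hF_sum : Summable fun k => ∫ s in (0 : ℝ)..t, F k s := by
    simp only [F, integral_sub_rpow_mul_pow_div_Gamma hβ ht]
    exact (summable_pow_div_Gamma_mul_add hβ hβ1 (by linarith) _).mul_left _
  calc γ * ∫ s in (0 : ℝ)..t, (t - s) ^ (β - 1) * mittagLeffler β (γ * s ^ β)
      = γ * ∑' k, ∫ s in (0 : ℝ)..t, F k s := by
        congr 1
        simp only [mittagLeffler, ← tsum_mul_left]
        rw [intervalIntegral.integral_tsum_of_nonneg ht.le hF_int hF_nonneg hF_sum]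
    _ = γ * ∑' k : ℕ, Gamma β * t ^ β * ((γ * t ^ β) ^ k / Gamma (k * β + (β + 1))) := by
        simp only [F, integral_sub_rpow_mul_pow_div_Gamma hβ ht]
    _ = Gamma β * ∑' k : ℕ, (γ * t ^ β) ^ (k + 1) / Gamma ((k + 1 : ℕ) * β + 1) := by
        rw [← tsum_mul_left, ← tsum_mul_left]
        congr 1 with k
        push_cast
        ring_nf
    _ = Gamma β * (mittagLeffler β (γ * t ^ β) - 1) := by rw [mittagLeffler_sub_one hβ hβ1]

/-- Lemma 2.6, equality form: for `1/2 < α < 1`, `γ > 0` and `t > 0`,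
`(γ / Γ(2α−1)) ∫₀ᵗ (t−s)^{2α−2} E_{2α−1}(γ s^{2α−1}) ds = E_{2α−1}(γ t^{2α−1}) − 1`. -/
theorem mittagLeffler_integral_eq (α γ t : ℝ) (hα : 1 / 2 < α) (hα' : α < 1)
    (hγ : 0 < γ) (ht : 0 < t) :
    γ / Real.Gamma (2 * α - 1) *
        ∫ s in (0 : ℝ)..t,
          (t - s) ^ (2 * α - 2) * mittagLeffler (2 * α - 1) (γ * s ^ (2 * α - 1)) =
      mittagLeffler (2 * α - 1) (γ * t ^ (2 * α - 1)) - 1 := by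
  have hβ : 0 < 2 * α - 1 := by linarith
  have key := mul_integral_sub_rpow_mul_mittagLeffler hβ (by linarith) hγ.le ht
  rw [show 2 * α - 1 - 1 = 2 * α - 2 by ring] at key
  rw [div_mul_eq_mul_div, key, mul_div_cancel_left₀ _ (Gamma_pos_of_pos hβ).ne']
end

section
/- Let h > 0, 1/2 < α < 1, let A, B be real n×n matrices with AB = BA, let C be a real n×m matrix, and let v ∈ ℝⁿ. If Cᵀ (Bᵀ)^i (Aᵀ)^j v = 0 for all indices 0 ≤ i ≤ n−1 and 0 ≤ j ≤ n−1 (where Mᵀ denotes matrix transpose), then Cᵀ 𝓔^{Aᵀ,Bᵀ}_{h,α,α}(t) v = 0 for every t ∈ ℝ. -/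
open scoped Matrix.Norms.L2Operator Matrix

/-- The three-parameter matrix Mittag-Leffler function
`E^δ_{α,β}(A s^α) = Σ_{k=0}^∞ ((δ)_k / (Γ(kα + β) · k!)) · A^k · s^{kα}`. -/
noncomputable def matrixMittagLeffler {n : ℕ} (α β δ : ℝ)
    (A : Matrix (Fin n) (Fin n) ℝ) (s : ℝ) : Matrix (Fin n) (Fin n) ℝ :=
  ∑' k : ℕ,
    ((ascPochhammer ℝ k).eval δ / (Real.Gamma ((k : ℝ) * α + β) * (k.factorial : ℝ)) *
        s ^ ((k : ℝ) * α)) • A ^ k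

/-- The delayed perturbation of the three-parameter Mittag-Leffler type matrix function
`𝓔^{A,B}_{h,α,β}`: it vanishes for `t ≤ −h`, and for `(m−1)h < t ≤ mh` (with `m ≥ 0`,
i.e. `m = ⌈t/h⌉`) it equals
`Σ_{k=0}^{m} (t − (k−1)h)^{kα+β−1} · B^k · E^{k+1}_{α,kα+β}(A (t − (k−1)h)^α)`. -/
noncomputable def delayedMLPert {n : ℕ} (h α β : ℝ)
    (A B : Matrix (Fin n) (Fin n) ℝ) (t : ℝ) : Matrix (Fin n) (Fin n) ℝ :=
  if t ≤ -h then 0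
  else
    ∑ k ∈ Finset.range (⌈t / h⌉.toNat + 1),
      ((t - ((k : ℝ) - 1) * h) ^ ((k : ℝ) * α + β - 1)) •
        (B ^ k * matrixMittagLeffler α ((k : ℝ) * α + β) ((k : ℝ) + 1) A
          (t - ((k : ℝ) - 1) * h))

/-!
By Cayley–Hamilton every power of a square matrix of size `n` is a linear combination of its
powers below `n`, so the relations on `Cᵀ (Bᵀ)^i (Aᵀ)^j v` for `i, j < n` extend to all `i, j`.
The matrices `M` with `Cᵀ M v = 0` form a closed subspace, and `𝓔^{Aᵀ,Bᵀ}_{h,α,α}(t)` is a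
finite combination of products `(Bᵀ)^k E` with `E` a limit of combinations of powers of `Aᵀ`.
-/

open Polynomial in
theorem Polynomial.Monic.pow_mem_of_aeval_eq_zero {R A : Type*} [CommRing R] [Nontrivial R]
    [Ring A] [Algebra R A] {q : R[X]} (hq : q.Monic) {x : A} (hx : aeval x q = 0)
    {S : Submodule R A} (hS : ∀ p < q.natDegree, x ^ p ∈ S) (k : ℕ) : x ^ k ∈ S := by
  classical
  have hdeg : X ^ k %ₘ q ∈ degreeLT R q.natDegree := by
    rw [mem_degreeLT, ← degree_eq_natDegree hq.ne_zero]
    exact degree_modByMonic_lt _ hq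
  have hspan : degreeLT R q.natDegree ≤ S.comap (aeval x).toLinearMap := by
    rw [degreeLT_eq_span_X_pow, Submodule.span_le]
    simp only [Finset.coe_image, Finset.coe_range, Set.image_subset_iff]
    intro p hp
    simpa using hS p hp
  simpa [aeval_modByMonic_eq_self_of_root hx] using hspan hdeg

theorem Matrix.pow_mem_of_forall_pow_lt_card_mem {ι R : Type*} [Fintype ι] [DecidableEq ι]
    [CommRing R] [Nontrivial R] {S : Submodule R (Matrix ι ι R)} (M : Matrix ι ι R)
    (hS : ∀ p < Fintype.card ι, M ^ p ∈ S) (k : ℕ) : M ^ k ∈ S :=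
  M.charpoly_monic.pow_mem_of_aeval_eq_zero M.aeval_self_charpoly
    (by rwa [M.charpoly_natDegree_eq_dim]) k

theorem Matrix.pow_mul_pow_mem_of_lt_card {ι R : Type*} [Fintype ι] [DecidableEq ι]
    [CommRing R] [Nontrivial R] {S : Submodule R (Matrix ι ι R)} (X Y : Matrix ι ι R)
    (hS : ∀ i < Fintype.card ι, ∀ j < Fintype.card ι, X ^ i * Y ^ j ∈ S) (i j : ℕ) :
    X ^ i * Y ^ j ∈ S := by
  have hY : ∀ p < Fintype.card ι, X ^ p * Y ^ j ∈ S := fun p hp =>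
    Y.pow_mem_of_forall_pow_lt_card_mem (S := S.comap (LinearMap.mulLeft R (X ^ p)))
      (hS p hp) j
  exact X.pow_mem_of_forall_pow_lt_card_mem (S := S.comap (LinearMap.mulRight R (Y ^ j))) hY i

/-- Also when the series diverges: its `tsum` is then `0`. -/
theorem matrixMittagLeffler_mem {n : ℕ} {S : Submodule ℝ (Matrix (Fin n) (Fin n) ℝ)}
    (hS : IsClosed (S : Set (Matrix (Fin n) (Fin n) ℝ))) {A : Matrix (Fin n) (Fin n) ℝ}
    (hA : ∀ j, A ^ j ∈ S) (α β δ s : ℝ) : matrixMittagLeffler α β δ A s ∈ S :=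
  tsum_mem hS fun j => S.smul_mem _ (hA j)

theorem delayedMLPert_mem {n : ℕ} {S : Submodule ℝ (Matrix (Fin n) (Fin n) ℝ)}
    (hS : IsClosed (S : Set (Matrix (Fin n) (Fin n) ℝ))) {A B : Matrix (Fin n) (Fin n) ℝ}
    (hBA : ∀ k j, B ^ k * A ^ j ∈ S) (h α β t : ℝ) : delayedMLPert h α β A B t ∈ S := by
  unfold delayedMLPert
  split_ifs
  · exact S.zero_mem
  refine S.sum_mem fun k _ => S.smul_mem _ ?_
  have hSk : IsClosed (S.comap (LinearMap.mulLeft ℝ (B ^ k)) : Set (Matrix (Fin n) (Fin n) ℝ)) :=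
    hS.preimage (continuous_const.mul continuous_id)
  exact matrixMittagLeffler_mem (S := S.comap (LinearMap.mulLeft ℝ (B ^ k))) hSk (hBA k) _ _ _ _

theorem kalman_vanishing_of_rank_relations_general {n m : ℕ} (h α : ℝ)
    (A B : Matrix (Fin n) (Fin n) ℝ)
    (C : Matrix (Fin n) (Fin m) ℝ) (v : Fin n → ℝ)
    (hv : ∀ i j : ℕ, i ≤ n - 1 → j ≤ n - 1 → Cᵀ *ᵥ ((Bᵀ ^ i * Aᵀ ^ j) *ᵥ v) = 0) :
    ∀ t : ℝ, Cᵀ *ᵥ (delayedMLPert h α α Aᵀ Bᵀ t *ᵥ v) = 0 := by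
  let S : Submodule ℝ (Matrix (Fin n) (Fin n) ℝ) :=
    LinearMap.ker (Cᵀ.mulVecLin ∘ₗ LinearMap.applyₗ v ∘ₗ Matrix.toLin'.toLinearMap)
  have hS : ∀ M, M ∈ S ↔ Cᵀ *ᵥ (M *ᵥ v) = 0 := fun _ => Iff.rfl
  have hBA : ∀ k j, Bᵀ ^ k * Aᵀ ^ j ∈ S :=
    Matrix.pow_mul_pow_mem_of_lt_card _ _ fun i hi j hj =>
      (hS _).2 (hv i j (Nat.le_sub_one_of_lt (by simpa using hi))
        (Nat.le_sub_one_of_lt (by simpa using hj)))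
  exact fun t => (hS _).1 (delayedMLPert_mem S.closed_of_finiteDimensional hBA h α α t)

/-- part of the proof of the Kalman rank condition, Theorem 5.4: if
`Cᵀ (Bᵀ)^i (Aᵀ)^j v = 0` for all `0 ≤ i, j ≤ n−1`, then
`Cᵀ 𝓔^{Aᵀ,Bᵀ}_{h,α,α}(t) v = 0` for every real `t`. -/
theorem kalman_vanishing_of_rank_relations {n m : ℕ} (h α : ℝ) (hh : 0 < h)
    (hα : 1 / 2 < α) (hα' : α < 1)
    (A B : Matrix (Fin n) (Fin n) ℝ) (hAB : A * B = B * A)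
    (C : Matrix (Fin n) (Fin m) ℝ) (v : Fin n → ℝ)
    (hv : ∀ i j : ℕ, i ≤ n - 1 → j ≤ n - 1 → Cᵀ *ᵥ ((Bᵀ ^ i * Aᵀ ^ j) *ᵥ v) = 0) :
    ∀ t : ℝ, Cᵀ *ᵥ (delayedMLPert h α α Aᵀ Bᵀ t *ᵥ v) = 0 :=
  kalman_vanishing_of_rank_relations_general h α A B C v hv
end

section
/- Let h > 0, 0 < α < 1, and let A, B be real n×n matrices. Then the delayed Mittag-Leffler type matrix function t ↦ 𝓔^{A,B}_{h,α}(t) is continuous on the interval [−h, ∞) (with respect to the operator-norm topology on real n×n matrices); in particular, at every node t = mh with m a natural number, the piecewise formulas agree. -/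
/-!
Each summand `(t - kh)^{(k+1)α} E(A (t - kh)^α) B^k (A + B)`, with `t - kh` clamped at `0`, is
continuous on `ℝ` and vanishes on `(-∞, kh]`; on `[-h, ∞)` the function is therefore `1` plus a
locally finite sum of continuous functions. The Mittag-Leffler factor is continuous because
`E^δ_{α,β}(A s^α) = Σ c_j (s^α A)^j` is a power series of infinite radius: log-convexity of `Γ`
gives `Γ(x) / Γ(x + α) ≤ (x - 1)^{-α}`, so `c_{j+1} / c_j → 0`.
-/

open scoped Matrix.Norms.L2Operator

/-- The delayed Mittag-Leffler type matrix function `𝓔^{A,B}_{h,α}`: it vanishes for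
`t < −h`, equals the identity for `−h ≤ t ≤ 0`, and for `(m−1)h < t ≤ mh` with `m ≥ 1`
(i.e. `m = ⌈t/h⌉`) it equals
`I + Σ_{k=0}^{m−1} (t − kh)^{(k+1)α} · E^{k+1}_{α,(k+1)α+1}(A(t − kh)^α) · B^k (A + B)`. -/
noncomputable def delayedML {n : ℕ} (h α : ℝ)
    (A B : Matrix (Fin n) (Fin n) ℝ) (t : ℝ) : Matrix (Fin n) (Fin n) ℝ :=
  if t < -h then 0
  else if t ≤ 0 then 1
  else
    1 + ∑ k ∈ Finset.range (⌈t / h⌉.toNat),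
      ((t - (k : ℝ) * h) ^ (((k : ℝ) + 1) * α)) •
        (matrixMittagLeffler α (((k : ℝ) + 1) * α + 1) ((k : ℝ) + 1) A (t - (k : ℝ) * h) *
          (B ^ k * (A + B)))

open Real Filter Topology FormalMultilinearSeries

lemma Real.Gamma_mul_rpow_le_Gamma_add {x a : ℝ} (hx : 1 < x) (ha : 0 < a) :
    Gamma x * (x - 1) ^ a ≤ Gamma (x + a) := by
  have hΓ : Gamma x = (x - 1) * Gamma (x - 1) := by
    simpa using Gamma_add_one (s := x - 1) (by linarith)
  have hΓ0 : 0 < Gamma (x - 1) := Gamma_pos_of_pos (by linarith)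
  -- the secant slope of `log ∘ Gamma` over `[x - 1, x]` is `log (x - 1)`
  have hslope : log (x - 1) ≤ (log (Gamma (x + a)) - log (Gamma x)) / a := by
    have := convexOn_log_Gamma.secant_mono (a := x) (x := x - 1) (y := x + a)
      (Set.mem_Ioi.mpr (by linarith)) (Set.mem_Ioi.mpr (by linarith))
      (Set.mem_Ioi.mpr (by linarith)) (by linarith) (by linarith) (by linarith)
    simpa [hΓ, log_mul (by linarith : x - 1 ≠ 0) hΓ0.ne'] using this
  rw [le_div_iff₀ ha] at hslope
  rw [← log_le_log_iff (by positivity) (Gamma_pos_of_pos (by linarith)),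
    log_mul (by positivity) (by positivity), log_rpow (by linarith)]
  linarith

lemma Real.tendsto_Gamma_div_Gamma_add_atTop {a : ℝ} (ha : 0 < a) :
    Tendsto (fun x => Gamma x / Gamma (x + a)) atTop (𝓝 0) := by
  have hlim : Tendsto (fun x : ℝ => (x - 1) ^ (-a)) atTop (𝓝 0) :=
    (tendsto_rpow_neg_atTop ha).comp (tendsto_atTop_add_const_right _ (-1) tendsto_id)
  refine squeeze_zero' ?_ ?_ hlim
  · filter_upwards [eventually_gt_atTop 0] with x hx
    exact div_nonneg (Gamma_pos_of_pos hx).le (Gamma_pos_of_pos (by linarith)).le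
  · filter_upwards [eventually_gt_atTop 1] with x hx
    rw [div_le_iff₀ (Gamma_pos_of_pos (by linarith)), rpow_neg (by linarith),
      inv_mul_eq_div, le_div_iff₀ (by positivity)]
    exact Gamma_mul_rpow_le_Gamma_add hx ha

lemma tendsto_natCast_mul_add_atTop {α : ℝ} (hα : 0 < α) (β : ℝ) :
    Tendsto (fun j : ℕ => j * α + β) atTop atTop :=
  tendsto_atTop_add_const_right _ β (tendsto_natCast_atTop_atTop.atTop_mul_const hα)

noncomputable def mittagLefflerCoeff (α β δ : ℝ) (j : ℕ) : ℝ :=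
  (ascPochhammer ℝ j).eval δ / (Gamma (j * α + β) * j.factorial)

lemma mittagLefflerCoeff_succ_div {α β δ : ℝ} (hα : 0 < α) (hδ : 0 < δ) {j : ℕ}
    (hj : 0 < j * α + β) :
    mittagLefflerCoeff α β δ (j + 1) / mittagLefflerCoeff α β δ j =
      (δ + j) / (j + 1) * (Gamma (j * α + β) / Gamma (j * α + β + α)) := by
  have hP := (ascPochhammer_pos j δ hδ).ne'
  have hΓ := (Gamma_pos_of_pos hj).ne'
  have hΓ' := (Gamma_pos_of_pos (by linarith : 0 < j * α + β + α)).ne'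
  simp only [mittagLefflerCoeff, ascPochhammer_succ_eval, Nat.factorial_succ]
  push_cast
  rw [show ((j : ℝ) + 1) * α + β = j * α + β + α by ring]
  field_simp

lemma tendsto_mittagLefflerCoeff_succ_div {α β δ : ℝ} (hα : 0 < α) (hδ : 0 < δ) :
    Tendsto (fun j => mittagLefflerCoeff α β δ (j + 1) / mittagLefflerCoeff α β δ j) atTop
      (𝓝 0) := by
  have hpoch : Tendsto (fun j : ℕ => (δ + j) / (j + 1)) atTop (𝓝 1) := by
    have := tendsto_const_nhds (x := (1 : ℝ)).add
      (tendsto_one_div_add_atTop_nhds_zero_nat.const_mul (δ - 1))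
    rw [mul_zero, add_zero] at this
    refine this.congr fun j => ?_
    field_simp
    ring
  have := hpoch.mul
    ((tendsto_Gamma_div_Gamma_add_atTop hα).comp (tendsto_natCast_mul_add_atTop hα β))
  rw [mul_zero] at this
  refine this.congr' ?_
  filter_upwards [(tendsto_natCast_mul_add_atTop hα β).eventually_gt_atTop 0] with j hj
  exact (mittagLefflerCoeff_succ_div hα hδ hj).symm

lemma radius_ofScalars_mittagLefflerCoeff (E : Type*) [NormedRing E] [NormedAlgebra ℝ E]
    {α β δ : ℝ} (hα : 0 < α) (hδ : 0 < δ) :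
    (ofScalars E (mittagLefflerCoeff α β δ)).radius = ⊤ := by
  refine ofScalars_radius_eq_top_of_tendsto E _ ?_ ?_
  · filter_upwards [(tendsto_natCast_mul_add_atTop hα β).eventually_gt_atTop 0] with j hj
    exact div_ne_zero (ascPochhammer_pos j δ hδ).ne'
      (mul_ne_zero (Gamma_pos_of_pos hj).ne' (by positivity))
  · simpa only [norm_div] using
      (tendsto_zero_iff_norm_tendsto_zero.mp (tendsto_mittagLefflerCoeff_succ_div hα hδ))

lemma continuous_ofScalarsSum_mittagLefflerCoeff {E : Type*} [NormedRing E] [NormedAlgebra ℝ E]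
    [CompleteSpace E] {α β δ : ℝ} (hα : 0 < α) (hδ : 0 < δ) :
    Continuous (ofScalarsSum (E := E) (mittagLefflerCoeff α β δ)) := by
  have := (ofScalars E (mittagLefflerCoeff α β δ)).continuousOn
  rwa [radius_ofScalars_mittagLefflerCoeff E hα hδ, Metric.eball_top, continuousOn_univ] at this

lemma matrixMittagLeffler_eq_ofScalarsSum {n : ℕ} (α β δ : ℝ) (A : Matrix (Fin n) (Fin n) ℝ)
    {s : ℝ} (hs : 0 ≤ s) :
    matrixMittagLeffler α β δ A s = ofScalarsSum (mittagLefflerCoeff α β δ) (s ^ α • A) := by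
  rw [ofScalars_sum_eq, matrixMittagLeffler]
  refine tsum_congr fun j => ?_
  rw [mittagLefflerCoeff, smul_pow, smul_smul, ← rpow_mul_natCast hs, mul_comm α]

lemma continuousOn_matrixMittagLeffler {n : ℕ} {α β δ : ℝ} (hα : 0 < α) (hδ : 0 < δ)
    (A : Matrix (Fin n) (Fin n) ℝ) :
    ContinuousOn (matrixMittagLeffler α β δ A) (Set.Ici 0) := by
  have hsum : Continuous fun s : ℝ => ofScalarsSum (mittagLefflerCoeff α β δ) (s ^ α • A) :=
    (continuous_ofScalarsSum_mittagLefflerCoeff hα hδ).comp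
      ((continuous_rpow_const hα.le).smul continuous_const)
  exact hsum.continuousOn.congr fun s hs => matrixMittagLeffler_eq_ofScalarsSum α β δ A hs

noncomputable def delayedMLTerm {n : ℕ} (h α : ℝ) (A B : Matrix (Fin n) (Fin n) ℝ) (k : ℕ)
    (t : ℝ) : Matrix (Fin n) (Fin n) ℝ :=
  max (t - k * h) 0 ^ ((k + 1) * α) •
    (matrixMittagLeffler α ((k + 1) * α + 1) (k + 1) A (max (t - k * h) 0) * (B ^ k * (A + B)))

section delayedMLTerm

variable {n : ℕ} {h α : ℝ} (A B : Matrix (Fin n) (Fin n) ℝ) (k : ℕ)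

lemma continuous_delayedMLTerm (hα : 0 < α) : Continuous (delayedMLTerm h α A B k) := by
  have hs : Continuous fun t : ℝ => max (t - k * h) 0 := by fun_prop
  have hML := (continuousOn_matrixMittagLeffler (β := (k + 1) * α + 1) (δ := k + 1) hα
    (by positivity) A).comp_continuous hs
    fun t => le_max_right (t - k * h) 0
  exact ((continuous_rpow_const (by positivity)).comp hs).smul (hML.mul continuous_const)

lemma delayedMLTerm_of_le (hα : 0 < α) {t : ℝ} (ht : t ≤ k * h) :
    delayedMLTerm h α A B k t = 0 := by
  rw [delayedMLTerm, max_eq_right (sub_nonpos.mpr ht), zero_rpow (by positivity), zero_smul]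

lemma delayedMLTerm_of_lt {t : ℝ} (ht : k * h < t) :
    delayedMLTerm h α A B k t = (t - k * h) ^ ((k + 1) * α) •
      (matrixMittagLeffler α ((k + 1) * α + 1) (k + 1) A (t - k * h) * (B ^ k * (A + B))) := by
  rw [delayedMLTerm, max_eq_left (sub_nonneg.mpr ht.le)]

lemma locallyFinite_support_delayedMLTerm (hh : 0 < h) (hα : 0 < α) :
    LocallyFinite fun k => Function.support (delayedMLTerm h α A B k) := by
  intro t
  refine ⟨Set.Iio (t + 1), Iio_mem_nhds (lt_add_one t),
    (Set.finite_lt_nat ⌈(t + 1) / h⌉₊).subset ?_⟩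
  rintro k ⟨s, hs, hst⟩
  by_contra hk
  refine hs (delayedMLTerm_of_le A B k hα ?_)
  have := (div_le_iff₀ hh).mp ((Nat.le_ceil _).trans (Nat.cast_le.mpr (not_lt.mp hk)))
  linarith [Set.mem_Iio.mp hst]

end delayedMLTerm

lemma lt_toNat_ceil_div_iff {h t : ℝ} (hh : 0 < h) {k : ℕ} : k < ⌈t / h⌉.toNat ↔ k * h < t := by
  rw [Int.lt_toNat, Int.lt_ceil, lt_div_iff₀ hh, Int.cast_natCast]

lemma delayedML_eq_one_add_finsum {n : ℕ} {h α : ℝ} (hh : 0 < h) (hα : 0 < α)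
    (A B : Matrix (Fin n) (Fin n) ℝ) {t : ℝ} (ht : -h ≤ t) :
    delayedML h α A B t = 1 + ∑ᶠ k, delayedMLTerm h α A B k t := by
  rw [delayedML, if_neg (not_lt.mpr ht)]
  split_ifs with ht0
  · rw [finsum_eq_zero_of_forall_eq_zero fun k =>
      delayedMLTerm_of_le A B k hα (ht0.trans (by positivity)), add_zero]
  · rw [finsum_eq_sum_of_support_subset _ (s := Finset.range ⌈t / h⌉.toNat) ?_]
    · congr 1
      refine Finset.sum_congr rfl fun k hk => ?_
      exact (delayedMLTerm_of_lt A B k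
        ((lt_toNat_ceil_div_iff hh).mp (Finset.mem_range.mp hk))).symm
    · intro k hk
      rw [Finset.coe_range, Set.mem_Iio, lt_toNat_ceil_div_iff hh]
      by_contra hkt
      exact hk (delayedMLTerm_of_le A B k hα (not_lt.mp hkt))

theorem delayedML_continuousOn_general {n : ℕ} (h α : ℝ) (hh : 0 < h)
    (hα : 0 < α) (A B : Matrix (Fin n) (Fin n) ℝ) :
    ContinuousOn (delayedML h α A B) (Set.Ici (-h)) := by
  have hcont : Continuous fun t => 1 + ∑ᶠ k, delayedMLTerm h α A B k t :=
    continuous_const.add (continuous_finsum (fun k => continuous_delayedMLTerm A B k hα)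
      (locallyFinite_support_delayedMLTerm A B hh hα))
  exact hcont.continuousOn.congr fun t ht => delayedML_eq_one_add_finsum hh hα A B ht

/-- the delayed Mittag-Leffler type matrix function `t ↦ 𝓔^{A,B}_{h,α}(t)`
is continuous on `[−h, ∞)` with respect to the operator-norm topology on real `n×n`
matrices; in particular the piecewise formulas agree at every node `t = mh`. -/
theorem delayedML_continuousOn {n : ℕ} (h α : ℝ) (hh : 0 < h)
    (hα : 0 < α) (hα' : α < 1) (A B : Matrix (Fin n) (Fin n) ℝ) :
    ContinuousOn (delayedML h α A B) (Set.Ici (-h)) :=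
  delayedML_continuousOn_general h α hh hα A B
end
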